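/- Work on the circle ℝ/2πℤ equipped with the measure μ obtained by pushing forward Lebesgue measure on [0, 2π) (total mass 2π), and let T : ℝ/2πℤ → ℝ/2πℤ denote the doubling map T(θ) = 2θ. Let C ≥ 1 be an integer and let Ω₀, Ω₁, …, Ω_{C−1} ⊆ ℝ/2πℤ be arcs each of length L, where 0 < L ≤ π. Then μ( ∩_{i=0}^{C−1} T^{−i}(Ω_i) ) ≤ L / 2^{C−1}. -/
import Mathlib


open MeasureTheory Real

instance : Fact (0 < 2 * Real.pi) := ⟨by positivity⟩

/-- `I` is an arc of length `L` on the circle `ℝ/2πℤ`: the image of a real interval of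
length `L` under the quotient map. -/
def IsArc (I : Set (AddCircle (2 * Real.pi))) (L : ℝ) : Prop :=
  ∃ a : ℝ, I = (fun x : ℝ => (x : AddCircle (2 * Real.pi))) '' Set.Ico a (a + L)

private lemma coe_eq_coe_iff' {x y : ℝ} :
    ((x : AddCircle (2 * Real.pi)) = (y : AddCircle (2 * Real.pi))) ↔
      ∃ k : ℤ, x - y = k * (2 * Real.pi) := by
  rw [show ((x : AddCircle (2 * Real.pi)) = (y : AddCircle (2 * Real.pi))) ↔
      x - y ∈ AddSubgroup.zmultiples (2 * Real.pi) from QuotientAddGroup.eq_iff_sub_mem,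
    AddSubgroup.mem_zmultiples_iff]
  constructor
  · rintro ⟨k, hk⟩
    exact ⟨k, by rw [← hk, zsmul_eq_mul]⟩
  · rintro ⟨k, hk⟩
    exact ⟨k, by rw [zsmul_eq_mul, ← hk]⟩

private lemma mem_arc_iff {a L : ℝ} (hL : L ≤ 2 * Real.pi)
    (x : AddCircle (2 * Real.pi)) :
    x ∈ (fun x : ℝ => (x : AddCircle (2 * Real.pi))) '' Set.Ico a (a + L) ↔
      ((AddCircle.equivIco (2 * Real.pi) a x : ℝ)) ∈ Set.Ico a (a + L) := by
  constructor
  · rintro ⟨y, hy, rfl⟩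
    have hy' : y ∈ Set.Ico a (a + 2 * Real.pi) := ⟨hy.1, lt_of_lt_of_le hy.2 (by linarith)⟩
    have h : AddCircle.equivIco (2 * Real.pi) a ↑y = ⟨y, hy'⟩ := by
      rw [Equiv.apply_eq_iff_eq_symm_apply]; rfl
    rw [h]
    exact hy
  · intro h
    exact ⟨(AddCircle.equivIco (2 * Real.pi) a x : ℝ), h,
      (AddCircle.equivIco (2 * Real.pi) a).symm_apply_apply x⟩

private lemma arc_measurableSet {I : Set (AddCircle (2 * Real.pi))} {L : ℝ}
    (h : IsArc I L) (hL : L ≤ 2 * Real.pi) : MeasurableSet I := by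
  obtain ⟨a, rfl⟩ := h
  have heq : (fun x : ℝ => (x : AddCircle (2 * Real.pi))) '' Set.Ico a (a + L)
      = (AddCircle.measurableEquivIco (2 * Real.pi) a) ⁻¹'
          (Subtype.val ⁻¹' Set.Ico a (a + L)) := by
    ext x
    exact mem_arc_iff hL x
  rw [heq]
  exact (AddCircle.measurableEquivIco _ a).measurable
    (measurable_subtype_coe measurableSet_Ico)

private lemma arc_volume_le {I : Set (AddCircle (2 * Real.pi))} {L : ℝ}
    (h : IsArc I L) (hL0 : 0 < L) (hL : L ≤ Real.pi) :
    volume I ≤ ENNReal.ofReal L := by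
  have hπ := Real.pi_pos
  obtain ⟨a, hIeq⟩ := h
  have hmeas : MeasurableSet I := arc_measurableSet ⟨a, hIeq⟩ (by linarith)
  have hmp := AddCircle.measurePreserving_mk (2 * Real.pi) a
  rw [← hmp.measure_preimage hmeas.nullMeasurableSet,
    Measure.restrict_apply' measurableSet_Ioc]
  have hsub : (fun x : ℝ => (x : AddCircle (2 * Real.pi))) ⁻¹' I ∩
      Set.Ioc a (a + 2 * Real.pi) ⊆ Set.Icc a (a + L) ∪ {a + 2 * Real.pi} := by
    rintro y ⟨hy1, hy2⟩
    rw [hIeq] at hy1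
    obtain ⟨x, hx, hxy⟩ := hy1
    obtain ⟨k, hk⟩ := coe_eq_coe_iff'.mp hxy
    -- x - y = k * 2π ; x ∈ [a, a+L), y ∈ (a, a+2π]
    have hb1 : x - y < Real.pi := by
      have := hx.2
      have := hy2.1
      linarith
    have hb2 : -(2 * Real.pi) ≤ x - y := by
      have := hx.1
      have := hy2.2
      linarith
    have hk1 : (k : ℝ) < 1 := by nlinarith [hk]
    have hk2 : (-1 : ℝ) ≤ (k : ℝ) := by nlinarith [hk]
    have hk1' : k < 1 := by exact_mod_cast hk1
    have hk2' : (-1 : ℤ) ≤ k := by exact_mod_cast hk2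
    interval_cases k
    · -- k = -1 : y = x + 2π
      rw [show ((-1 : ℤ) : ℝ) = -1 by norm_num] at hk
      have hxa : x = a := le_antisymm (by have := hy2.2; linarith) hx.1
      right
      simp only [Set.mem_singleton_iff]
      linarith
    · -- k = 0 : y = x
      rw [show ((0 : ℤ) : ℝ) = 0 by norm_num] at hk
      have : y = x := by linarith
      exact Or.inl ⟨this ▸ hx.1, by rw [this]; exact hx.2.le⟩
  calc volume ((fun x : ℝ => (x : AddCircle (2 * Real.pi))) ⁻¹' I ∩
        Set.Ioc a (a + 2 * Real.pi))
      ≤ volume (Set.Icc a (a + L) ∪ {a + 2 * Real.pi}) := measure_mono hsub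
    _ ≤ volume (Set.Icc a (a + L)) + volume ({a + 2 * Real.pi} : Set ℝ) :=
        measure_union_le _ _
    _ = ENNReal.ofReal L := by
        rw [Real.volume_Icc, Real.volume_singleton, add_zero, add_sub_cancel_left]

private lemma arc_antipode {I : Set (AddCircle (2 * Real.pi))} {L : ℝ}
    (h : IsArc I L) (hL : L ≤ Real.pi) {x : AddCircle (2 * Real.pi)}
    (hx : x ∈ I) (hx' : x + ((Real.pi : ℝ) : AddCircle (2 * Real.pi)) ∈ I) : False := by
  have hπ := Real.pi_pos
  obtain ⟨a, rfl⟩ := h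
  obtain ⟨u, hu, hux⟩ := hx
  obtain ⟨v, hv, hveq⟩ := hx'
  subst hux
  have hco : ((v : ℝ) : AddCircle (2 * Real.pi)) = ((u + Real.pi : ℝ) : AddCircle (2 * Real.pi)) := by
    rw [AddCircle.coe_add]; exact hveq
  obtain ⟨k, hk⟩ := coe_eq_coe_iff'.mp hco
  -- v - (u + π) = k * 2π, with v - u ∈ (-L, L), so v - u - π ∈ (-L-π, L-π) ⊆ (-2π, 0)
  have h1 : v - (u + Real.pi) < 0 := by
    have := hv.2; have := hu.1; linarith
  have h2 : -(2 * Real.pi) < v - (u + Real.pi) := by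
    have := hv.1; have := hu.2; linarith
  have hk1 : (k : ℝ) < 0 := by nlinarith [hk]
  have hk2 : (-1 : ℝ) < (k : ℝ) := by nlinarith [hk]
  have hk1' : k < 0 := by exact_mod_cast hk1
  have hk2' : (-1 : ℤ) < k := by exact_mod_cast hk2
  omega

private lemma step_lemma {B Om : Set (AddCircle (2 * Real.pi))} (hB : MeasurableSet B)
    {L : ℝ} (hOm : IsArc Om L) (hL0 : 0 < L) (hL : L ≤ Real.pi) :
    2 * volume (Om ∩ (fun θ : AddCircle (2 * Real.pi) => θ + θ) ⁻¹' B) ≤ volume B := by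
  have hπ := Real.pi_pos
  set c : AddCircle (2 * Real.pi) := ((Real.pi : ℝ) : AddCircle (2 * Real.pi)) with hc
  have hcc : c + c = 0 := by
    rw [hc, ← AddCircle.coe_add, show Real.pi + Real.pi = 2 * Real.pi by ring]
    exact AddCircle.coe_period (2 * Real.pi)
  have hT : Measurable (fun θ : AddCircle (2 * Real.pi) => θ + θ) :=
    (continuous_id.add continuous_id).measurable
  have hOmM : MeasurableSet Om := arc_measurableSet hOm (by linarith)
  set X := Om ∩ (fun θ : AddCircle (2 * Real.pi) => θ + θ) ⁻¹' B with hX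
  have hXM : MeasurableSet X := hOmM.inter (hT hB)
  set Y := (fun θ : AddCircle (2 * Real.pi) => θ + c) ⁻¹' X with hY
  have hYM : MeasurableSet Y := (measurable_add_const c) hXM
  have hvolY : volume Y = volume X := measure_preimage_add_right volume c X
  have hdisj : Disjoint X Y := by
    rw [Set.disjoint_left]
    intro θ hθX hθY
    exact arc_antipode hOm hL hθX.1 hθY.1
  have hsub : X ∪ Y ⊆ (fun θ : AddCircle (2 * Real.pi) => θ + θ) ⁻¹' B := by
    rintro θ (hθ | hθ)
    · exact hθ.2
    · have h2 : (θ + c) + (θ + c) ∈ B := hθ.2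
      rwa [Set.mem_preimage, show θ + θ = (θ + c) + (θ + c) by
        rw [add_add_add_comm, hcc, add_zero]]
  have hpres : volume ((fun θ : AddCircle (2 * Real.pi) => θ + θ) ⁻¹' B) = volume B := by
    have h2 : (fun θ : AddCircle (2 * Real.pi) => θ + θ)
        = fun θ : AddCircle (2 * Real.pi) => (2 : ℤ) • θ := by
      funext θ; rw [two_zsmul]
    rw [h2]
    exact (Measure.measurePreserving_zsmul volume
      (by norm_num : (2 : ℤ) ≠ 0)).measure_preimage hB.nullMeasurableSet
  calc 2 * volume X = volume X + volume Y := by rw [hvolY, two_mul]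
    _ = volume (X ∪ Y) := (measure_union hdisj hYM).symm
    _ ≤ volume ((fun θ : AddCircle (2 * Real.pi) => θ + θ) ⁻¹' B) := measure_mono hsub
    _ = volume B := hpres

private lemma aux_bound (C : ℕ) (L : ℝ) (hL0 : 0 < L) (hLπ : L ≤ Real.pi)
    (Om : Fin (C + 1) → Set (AddCircle (2 * Real.pi)))
    (hOm : ∀ i, IsArc (Om i) L) :
    2 ^ C * volume (⋂ i : Fin (C + 1),
        ((fun θ : AddCircle (2 * Real.pi) => θ + θ)^[(i : ℕ)]) ⁻¹' (Om i)) ≤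
      ENNReal.ofReal L := by
  have hπ := Real.pi_pos
  induction C with
  | zero =>
    rw [pow_zero, one_mul]
    refine le_trans (measure_mono ?_) (arc_volume_le (hOm 0) hL0 hLπ)
    intro x hx
    have h := Set.mem_iInter.mp hx 0
    simpa using h
  | succ C ih =>
    have hT : Measurable (fun θ : AddCircle (2 * Real.pi) => θ + θ) :=
      (continuous_id.add continuous_id).measurable
    have hset : (⋂ i : Fin (C + 2),
          ((fun θ : AddCircle (2 * Real.pi) => θ + θ)^[(i : ℕ)]) ⁻¹' (Om i))
        = Om 0 ∩ (fun θ : AddCircle (2 * Real.pi) => θ + θ) ⁻¹'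
            (⋂ i : Fin (C + 1),
              ((fun θ : AddCircle (2 * Real.pi) => θ + θ)^[(i : ℕ)]) ⁻¹' (Om i.succ)) := by
      ext θ
      simp only [Set.mem_iInter, Set.mem_inter_iff, Set.mem_preimage]
      constructor
      · intro h
        refine ⟨by simpa using h 0, fun i => ?_⟩
        have h2 := h i.succ
        rw [Fin.val_succ, Function.iterate_succ_apply] at h2
        exact h2
      · rintro ⟨h0, h⟩ i
        induction i using Fin.cases with
        | zero => simpa using h0
        | succ j =>
          rw [Fin.val_succ, Function.iterate_succ_apply]
          exact h j
    have hBmeas : MeasurableSet (⋂ i : Fin (C + 1),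
        ((fun θ : AddCircle (2 * Real.pi) => θ + θ)^[(i : ℕ)]) ⁻¹' (Om i.succ)) := by
      refine MeasurableSet.iInter fun i => ?_
      exact (hT.iterate (i : ℕ)) (arc_measurableSet (hOm i.succ) (by linarith))
    have hih := ih (fun i => Om i.succ) (fun i => hOm i.succ)
    rw [hset]
    calc (2 : ENNReal) ^ (C + 1) * volume (Om 0 ∩ (fun θ : AddCircle (2 * Real.pi) => θ + θ) ⁻¹'
            (⋂ i : Fin (C + 1),
              ((fun θ : AddCircle (2 * Real.pi) => θ + θ)^[(i : ℕ)]) ⁻¹' (Om i.succ)))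
        = 2 ^ C * (2 * volume (Om 0 ∩ (fun θ : AddCircle (2 * Real.pi) => θ + θ) ⁻¹'
            (⋂ i : Fin (C + 1),
              ((fun θ : AddCircle (2 * Real.pi) => θ + θ)^[(i : ℕ)]) ⁻¹' (Om i.succ)))) := by
          ring
      _ ≤ 2 ^ C * volume (⋂ i : Fin (C + 1),
            ((fun θ : AddCircle (2 * Real.pi) => θ + θ)^[(i : ℕ)]) ⁻¹' (Om i.succ)) :=
          mul_le_mul_right (step_lemma hBmeas (hOm 0) hL0 hLπ) _
      _ ≤ ENNReal.ofReal L := hih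

/-- (STATEMENT 11) Successive refinement: if `Ω₀, …, Ω_{C-1}` are arcs of length `L`
(`0 < L ≤ π`) on the circle `ℝ/2πℤ` (with the measure of total mass `2π`) and
`T θ = 2θ` is the doubling map, then `μ(∩_{i} T^{-i}(Ω_i)) ≤ L / 2^{C-1}`. -/
theorem successive_refinement_measure_bound
    (C : ℕ) (hC : 1 ≤ C) (L : ℝ) (hL0 : 0 < L) (hLπ : L ≤ Real.pi)
    (Om : Fin C → Set (AddCircle (2 * Real.pi)))
    (hOm : ∀ i, IsArc (Om i) L) :
    volume (⋂ i : Fin C,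
        ((fun θ : AddCircle (2 * Real.pi) => θ + θ)^[(i : ℕ)]) ⁻¹' (Om i)) ≤
      ENNReal.ofReal (L / 2 ^ (C - 1)) := by
  obtain ⟨C', rfl⟩ : ∃ C', C = C' + 1 := ⟨C - 1, (Nat.succ_pred_eq_of_pos hC).symm⟩
  have hkey := aux_bound C' L hL0 hLπ Om hOm
  have h2 : ENNReal.ofReal (L / 2 ^ (C' + 1 - 1)) = ENNReal.ofReal L / 2 ^ C' := by
    rw [Nat.add_sub_cancel, ENNReal.ofReal_div_of_pos (by positivity),
      ENNReal.ofReal_pow (by norm_num : (0:ℝ) ≤ 2)]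
    norm_num
  rw [h2, ENNReal.le_div_iff_mul_le
    (Or.inl (pow_ne_zero _ two_ne_zero))
    (Or.inl (ENNReal.pow_ne_top ENNReal.ofNat_ne_top)), mul_comm]
  exact hkey
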